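/- arXiv:1211.0389 — 3 statements merged into one kernel-verified Lean document; each statement's English description precedes it below -/
import Mathlib

section
/- Let A and A' = A + D be real symmetric n×n matrices, and for z = u + iv with v > 0 let R = (n^{-1/2}A - zI)^{-1} and R' = (n^{-1/2}A' - zI)^{-1}. Then |Tr R - Tr R'| ≤ v^{-2} (Tr D²)^{1/2}. -/
/-!
By the resolvent identity, `Tr R - Tr R' = n^{-1/2} Tr (R' R D)`. For a Hermitian `H` one has
`Im ⟪x, (H - z) x⟫ = -Im z ‖x‖²`, so `‖(H - z)⁻¹‖ ≤ 1 / Im z` in operator norm and `‖R' R‖ ≤ v⁻²`.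
Finally `|Tr (X D)| ≤ ‖X‖ ∑ⱼ ‖D eⱼ‖ ≤ ‖X‖ √n (Tr D²)^{1/2}` by Cauchy–Schwarz, and the `√n`
cancels the normalization.
-/

open Matrix

theorem LinearMap.IsSymmetric.abs_im_mul_norm_le_norm_sub_smul {E : Type*}
    [NormedAddCommGroup E] [InnerProductSpace ℂ E] {T : E →ₗ[ℂ] E} (hT : T.IsSymmetric)
    (z : ℂ) (x : E) : |z.im| * ‖x‖ ≤ ‖T x - z • x‖ := by
  have him : (inner ℂ x (T x - z • x)).im = -(z.im * ‖x‖ ^ 2) := by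
    have hreal : (inner ℂ x (T x)).im = 0 := hT.im_inner_self_apply x
    rw [inner_sub_right, inner_smul_right, inner_self_eq_norm_sq_to_K, Complex.sub_im]
    simp [hreal, ← Complex.ofReal_pow]
  have key : |z.im| * ‖x‖ ^ 2 ≤ ‖x‖ * ‖T x - z • x‖ := calc
    |z.im| * ‖x‖ ^ 2 = |(inner ℂ x (T x - z • x)).im| := by
      rw [him, abs_neg, abs_mul, abs_of_nonneg (sq_nonneg ‖x‖)]
    _ ≤ ‖inner ℂ x (T x - z • x)‖ := Complex.abs_im_le_norm _
    _ ≤ ‖x‖ * ‖T x - z • x‖ := norm_inner_le_norm _ _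
  rcases (norm_nonneg x).eq_or_lt with hx | hx
  · simp [← hx]
  · nlinarith

open scoped Matrix.Norms.L2Operator
open WithLp

namespace Matrix

theorem trace_inv_sub_trace_inv {n R : Type*} [Fintype n] [DecidableEq n] [CommRing R]
    {M M' : Matrix n n R} (hM : IsUnit M) (hM' : IsUnit M') :
    trace M⁻¹ - trace M'⁻¹ = trace (M'⁻¹ * M⁻¹ * (M' - M)) := by
  rw [← trace_sub, inv_sub_inv (iff_of_true hM hM'), trace_mul_cycle]

theorem IsSymm.isHermitian_smul_map_ofReal {n : Type*} {A : Matrix n n ℝ} (hA : A.IsSymm)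
    {c : ℂ} (hc : IsSelfAdjoint c) : (c • A.map Complex.ofReal).IsHermitian :=
  ((isHermitian_iff_isSymm.mpr hA).map _ fun r => (Complex.conj_ofReal r).symm).smul hc

theorem IsSymm.trace_mul_self_eq_sum_sq {n : Type*} [Fintype n] {A : Matrix n n ℝ}
    (hA : A.IsSymm) : trace (A * A) = ∑ i, ∑ j, A i j ^ 2 := by
  simp only [trace, diag, mul_apply, sq]
  exact Finset.sum_congr rfl fun i _ => Finset.sum_congr rfl fun j _ => by rw [hA.apply i j]

namespace IsHermitian

variable {m : Type*} [Fintype m] [DecidableEq m] {H : Matrix m m ℂ}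

theorem abs_im_mul_norm_le_norm_sub_smul_one_mulVec (hH : H.IsHermitian) (z : ℂ) (x : m → ℂ) :
    |z.im| * ‖toLp 2 x‖ ≤ ‖toLp 2 ((H - z • 1) *ᵥ x)‖ := by
  simpa [sub_mulVec, smul_mulVec, toLpLin_toLp] using
    (isSymmetric_toEuclideanLin_iff.mpr hH).abs_im_mul_norm_le_norm_sub_smul z (toLp 2 x)

theorem isUnit_sub_smul_one (hH : H.IsHermitian) {z : ℂ} (hz : z.im ≠ 0) :
    IsUnit (H - z • 1) := by
  refine mulVec_injective_iff_isUnit.mp fun x y hxy => ?_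
  have h := hH.abs_im_mul_norm_le_norm_sub_smul_one_mulVec z (x - y)
  rw [mulVec_sub, hxy, sub_self, toLp_zero, norm_zero] at h
  have hxy0 : ‖toLp 2 (x - y)‖ ≤ 0 := nonpos_of_mul_nonpos_right h (abs_pos.mpr hz)
  simpa [sub_eq_zero] using hxy0

theorem l2_opNorm_inv_sub_smul_one_le (hH : H.IsHermitian) {z : ℂ} (hz : z.im ≠ 0) :
    ‖(H - z • 1)⁻¹‖ ≤ |z.im|⁻¹ := by
  rw [← l2_opNorm_toEuclideanCLM]
  refine ContinuousLinearMap.opNorm_le_bound _ (by positivity) fun y => ?_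
  have h := hH.abs_im_mul_norm_le_norm_sub_smul_one_mulVec z ((H - z • 1)⁻¹ *ᵥ ofLp y)
  rw [mulVec_mulVec, mul_nonsing_inv _ ((hH.isUnit_sub_smul_one hz).map detMonoidHom),
    one_mulVec, toLp_ofLp] at h
  rwa [le_inv_mul_iff₀ (abs_pos.mpr hz)]

end IsHermitian

variable {𝕜 n : Type*} [RCLike 𝕜] [Fintype n] [DecidableEq n]

theorem norm_trace_mul_le_l2_opNorm_mul_sum_norm_col (A B : Matrix n n 𝕜) :
    ‖trace (A * B)‖ ≤ ‖A‖ * ∑ j, ‖toLp 2 (Bᵀ j)‖ := by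
  have htrace : trace (A * B) = ∑ j, (A *ᵥ Bᵀ j) j := rfl
  rw [htrace, Finset.mul_sum]
  refine (norm_sum_le _ _).trans (Finset.sum_le_sum fun j _ => ?_)
  calc ‖(A *ᵥ Bᵀ j) j‖ ≤ ‖toEuclideanCLM (n := n) (𝕜 := 𝕜) A (toLp 2 (Bᵀ j))‖ :=
        PiLp.norm_apply_le (toLp 2 (A *ᵥ Bᵀ j)) j
    _ ≤ ‖A‖ * ‖toLp 2 (Bᵀ j)‖ := ContinuousLinearMap.le_opNorm _ _

theorem norm_trace_mul_le_l2_opNorm_mul_sqrt_card (A B : Matrix n n 𝕜) :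
    ‖trace (A * B)‖ ≤ ‖A‖ * (√(Fintype.card n) * √(∑ i, ∑ j, ‖B i j‖ ^ 2)) := by
  refine (norm_trace_mul_le_l2_opNorm_mul_sum_norm_col A B).trans
    (mul_le_mul_of_nonneg_left ?_ (norm_nonneg A))
  have hcol : ∀ j, ‖toLp 2 (Bᵀ j)‖ ^ 2 = ∑ i, ‖B i j‖ ^ 2 := fun j =>
    EuclideanSpace.norm_sq_eq _
  simpa [hcol, Finset.sum_comm (f := fun i j => ‖B i j‖ ^ 2)] using
    Real.sum_mul_le_sqrt_mul_sqrt Finset.univ (fun _ => 1) (fun j => ‖toLp 2 (Bᵀ j)‖)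

end Matrix

theorem trace_resolvent_perturbation {n : ℕ} (A D : Matrix (Fin n) (Fin n) ℝ)
    (hA : A.IsSymm) (hD : D.IsSymm) (z : ℂ) (hz : 0 < z.im) :
    ‖(Matrix.trace ((((Real.sqrt n : ℂ))⁻¹ • A.map Complex.ofReal
            - z • (1 : Matrix (Fin n) (Fin n) ℂ))⁻¹)
          - Matrix.trace ((((Real.sqrt n : ℂ))⁻¹ • (A + D).map Complex.ofReal
            - z • (1 : Matrix (Fin n) (Fin n) ℂ))⁻¹))‖
      ≤ (1 / z.im ^ 2) * Real.sqrt (Matrix.trace (D * D)) := by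
  set c : ℂ := (Real.sqrt n : ℂ)⁻¹
  have hc_real : IsSelfAdjoint c := IsSelfAdjoint.inv₀ (Complex.conj_ofReal _)
  have hH := hA.isHermitian_smul_map_ofReal hc_real
  have hH' := (hA.add hD).isHermitian_smul_map_ofReal hc_real
  have hdiff : (c • (A + D).map Complex.ofReal - z • 1) - (c • A.map Complex.ofReal - z • 1)
      = c • D.map Complex.ofReal := by
    rw [Matrix.map_add Complex.ofReal Complex.ofReal_add, smul_add]
    abel
  have hres : ‖(c • (A + D).map Complex.ofReal - z • 1)⁻¹ * (c • A.map Complex.ofReal - z • 1)⁻¹‖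
      ≤ 1 / z.im ^ 2 := by
    grw [l2_opNorm_mul, hH'.l2_opNorm_inv_sub_smul_one_le hz.ne',
      hH.l2_opNorm_inv_sub_smul_one_le hz.ne', abs_of_pos hz]
    rw [one_div, ← inv_pow, sq]
  have hc : ‖c‖ * √(Fintype.card (Fin n)) ≤ 1 := by
    rw [norm_inv, Complex.norm_real, Real.norm_of_nonneg (Real.sqrt_nonneg _), Fintype.card_fin]
    exact inv_mul_le_one_of_le₀ le_rfl (Real.sqrt_nonneg _)
  have hD_sum : ∑ i, ∑ j, ‖D.map Complex.ofReal i j‖ ^ 2 = trace (D * D) := by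
    simp [hD.trace_mul_self_eq_sum_sq]
  rw [trace_inv_sub_trace_inv (hH.isUnit_sub_smul_one hz.ne') (hH'.isUnit_sub_smul_one hz.ne'),
    hdiff, Matrix.mul_smul, trace_smul, smul_eq_mul, norm_mul]
  grw [norm_trace_mul_le_l2_opNorm_mul_sqrt_card, hD_sum, hres]
  calc _ = ‖c‖ * √(Fintype.card (Fin n)) * (1 / z.im ^ 2) * √(trace (D * D)) := by ring
    _ ≤ 1 / z.im ^ 2 * √(trace (D * D)) := by grw [hc, one_mul]
end

section
/- Let σ_{ij}² ≥ 0 with max_i (1/n)Σ_j σ_{ij}² ≤ C². Let T be a tree on vertex set {1, ..., t} with t−1 edges. Then the sum over all injections (or all maps) ι: {1,...,t} → {1,...,n} of the product over edges {a,b} of T of σ_{ι(a)ι(b)}² is at most C^{2(t−1)} n^t; equivalently, n^{-t} Σ_{i_1,...,i_t = 1}^n Π_{{a,b} ∈ E(T)} σ_{i_a i_b}² ≤ C^{2(t−1)}. -/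
/-!
Root the tree at some vertex `r` and send every other vertex `w` to a neighbour `p w` strictly
closer to `r`; then `w ↦ s(p w, w)` is a bijection from the non-root vertices onto the edges.
Repeatedly pick a vertex `w` of maximal depth among those still carrying an edge: its index
occurs in no other remaining factor, so summing it out costs at most `∑ⱼ σ² ≤ n C²`, and after
`t - 1` such leaf removals only the `n ^ t` free choices of indices are left.
-/

open Finset Function SimpleGraph

namespace SimpleGraph

variable {V : Type*} {G : SimpleGraph V}

theorem Connected.exists_adj_dist_lt (hG : G.Connected) {w r : V} (hw : w ≠ r) :
    ∃ u, G.Adj u w ∧ G.dist u r < G.dist w r := by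
  obtain ⟨q, hq⟩ := hG.exists_walk_length_eq_dist w r
  have hq₀ : ¬ q.Nil := Walk.not_nil_of_ne hw
  refine ⟨q.snd, (q.adj_snd hq₀).symm, ?_⟩
  have := Walk.length_tail_add_one hq₀
  have := dist_le q.tail
  omega

theorem IsTree.prod_edgeFinset_eq_prod_erase [Fintype V] [DecidableEq V] [DecidableRel G.Adj]
    {M : Type*} [CommMonoid M] (hG : G.IsTree) {r : V} {p : V → V} {d : V → ℕ}
    (hadj : ∀ w ≠ r, G.Adj (p w) w) (hd : ∀ w ≠ r, d (p w) < d w) (f : Sym2 V → M) :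
    ∏ e ∈ G.edgeFinset, f e = ∏ w ∈ univ.erase r, f s(p w, w) := by
  have hinj : Set.InjOn (fun w => s(p w, w)) (univ.erase r : Finset V) := by
    intro x hx y hy hxy
    rcases Sym2.eq_iff.1 hxy with ⟨-, hxy⟩ | ⟨hpx, hpy⟩
    · exact hxy
    · have hx' := hd x (ne_of_mem_erase hx)
      have hy' := hd y (ne_of_mem_erase hy)
      rw [hpx] at hx'
      rw [← hpy] at hy'
      omega
  have hsub : (univ.erase r).image (fun w => s(p w, w)) ⊆ G.edgeFinset := by
    simp only [subset_iff, mem_image, mem_erase, mem_edgeFinset]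
    rintro _ ⟨w, ⟨hw, -⟩, rfl⟩
    exact hadj w hw
  have hcard : #G.edgeFinset ≤ #((univ.erase r).image fun w => s(p w, w)) := by
    rw [card_image_of_injOn hinj, card_erase_of_mem (mem_univ r), card_univ,
      ← hG.card_edgeFinset]
    omega
  rw [← eq_of_subset_of_card_le hsub hcard, prod_image hinj]

end SimpleGraph

section
variable {V α : Type*} [Fintype V] [DecidableEq V] [Fintype α]

theorem Fintype.sum_sum_update {M : Type*} [AddCommMonoid M] (F : (V → α) → M) (v : V) :
    ∑ x, ∑ j, F (update x v j) = Fintype.card α • ∑ x, F x := by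
  have hinv : Involutive fun y : (V → α) × α => (update y.1 v y.2, y.1 v) := by
    intro y
    simp
  rw [← Fintype.sum_prod_type', ← card_univ, ← sum_const, sum_comm, ← Fintype.sum_prod_type']
  exact Equiv.sum_comp hinv.toPerm (fun y => F y.1)

theorem card_mul_sum_mul_le {g : α → α → ℝ} {K : ℝ} (hK : ∀ i, ∑ j, g i j ≤ K)
    {Q : (V → α) → ℝ} (hQ : ∀ x, 0 ≤ Q x) {u v : V} (huv : u ≠ v)
    (hQv : ∀ x j, Q (update x v j) = Q x) :
    Fintype.card α * ∑ x, g (x u) (x v) * Q x ≤ K * ∑ x, Q x := by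
  rw [← nsmul_eq_mul, ← Fintype.sum_sum_update _ v, mul_sum]
  gcongr with x
  simp only [update_of_ne huv, update_self, hQv, ← sum_mul]
  exact mul_le_mul_of_nonneg_right (hK _) (hQ x)

theorem card_pow_mul_sum_prod_le {g : α → α → ℝ} (hg : ∀ i j, 0 ≤ g i j) {K : ℝ} (hK₀ : 0 ≤ K)
    (hK : ∀ i, ∑ j, g i j ≤ K) {p : V → V} {d : V → ℕ} (S : Finset V)
    (hS : ∀ w ∈ S, d (p w) < d w) :
    Fintype.card α ^ #S * ∑ x : V → α, ∏ w ∈ S, g (x (p w)) (x w)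
      ≤ K ^ #S * Fintype.card α ^ Fintype.card V := by
  induction S using Finset.strongInduction with
  | H S ih =>
  rcases S.eq_empty_or_nonempty with rfl | hne
  · simp
  obtain ⟨w₀, hw₀, hmax⟩ := exists_max_image S d hne
  have hleaf : ∀ w ∈ S, p w ≠ w₀ := by
    rintro w hw rfl
    have := hS w hw
    have := hmax w hw
    omega
  set S' := S.erase w₀
  set Q : (V → α) → ℝ := fun x => ∏ w ∈ S', g (x (p w)) (x w)
  have hcard : #S = #S' + 1 := (card_erase_add_one hw₀).symm
  have hsplit : ∀ x : V → α, ∏ w ∈ S, g (x (p w)) (x w) = g (x (p w₀)) (x w₀) * Q x :=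
    fun x => (mul_prod_erase S _ hw₀).symm
  have hQ : ∀ x, 0 ≤ Q x := fun x => prod_nonneg fun w _ => hg _ _
  have hQv : ∀ x j, Q (update x w₀ j) = Q x := by
    intro x j
    refine prod_congr rfl fun w hw => ?_
    rw [update_of_ne (hleaf w (mem_of_mem_erase hw)), update_of_ne (ne_of_mem_erase hw)]
  have hS' := ih S' (erase_ssubset hw₀) fun w hw => hS w (mem_of_mem_erase hw)
  calc Fintype.card α ^ #S * ∑ x : V → α, ∏ w ∈ S, g (x (p w)) (x w)
      = Fintype.card α ^ #S' * (Fintype.card α * ∑ x, g (x (p w₀)) (x w₀) * Q x) := by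
        simp only [hsplit, hcard, pow_succ, mul_assoc]
    _ ≤ Fintype.card α ^ #S' * (K * ∑ x, Q x) :=
        mul_le_mul_of_nonneg_left (card_mul_sum_mul_le hK hQ (hleaf w₀ hw₀) hQv) (by positivity)
    _ = K * (Fintype.card α ^ #S' * ∑ x, Q x) := by ring
    _ ≤ K * (K ^ #S' * Fintype.card α ^ Fintype.card V) := mul_le_mul_of_nonneg_left hS' hK₀
    _ = K ^ #S * Fintype.card α ^ Fintype.card V := by rw [hcard]; ring

end

theorem tree_weight_sum_bound_general {n t : ℕ} (hn : 0 < n)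
    (C : ℝ)
    (s : Fin n → Fin n → ℝ) (hs : ∀ i j, 0 ≤ s i j)
    (hsym : ∀ i j, s i j = s j i)
    (hB : ∀ i, (1 / (n : ℝ)) * ∑ j, s i j ≤ C ^ 2)
    (T : SimpleGraph (Fin t)) [DecidableRel T.Adj] (hT : T.IsTree) :
    ((n : ℝ) ^ t)⁻¹ * ∑ ι : Fin t → Fin n,
        ∏ e ∈ T.edgeFinset,
          Sym2.lift ⟨fun a b => s (ι a) (ι b), fun a b => hsym (ι a) (ι b)⟩ e
      ≤ C ^ (2 * (t - 1)) := by
  obtain ⟨r⟩ := hT.connected.nonempty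
  choose! p hadj hd using fun w (hw : w ≠ r) => hT.connected.exists_adj_dist_lt hw
  have hrow : ∀ i, ∑ j, s i j ≤ n * C ^ 2 := fun i => by
    have := hB i
    rwa [one_div, inv_mul_le_iff₀ (by positivity)] at this
  have key := card_pow_mul_sum_prod_le hs (by positivity) hrow (d := (T.dist · r))
    (univ.erase r) fun w hw => hd w (ne_of_mem_erase hw)
  simp only [Fintype.card_fin, card_erase_of_mem (mem_univ r), card_univ] at key
  simp only [hT.prod_edgeFinset_eq_prod_erase (d := (T.dist · r)) hadj hd, Sym2.lift_mk]
  rw [inv_mul_le_iff₀ (by positivity)]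
  refine le_of_mul_le_mul_left ?_ (by positivity : (0 : ℝ) < n ^ (t - 1))
  calc (n : ℝ) ^ (t - 1) * ∑ ι : Fin t → Fin n, ∏ w ∈ univ.erase r, s (ι (p w)) (ι w)
      ≤ (n * C ^ 2) ^ (t - 1) * n ^ t := key
    _ = n ^ (t - 1) * (n ^ t * C ^ (2 * (t - 1))) := by rw [mul_pow, pow_mul]; ring

theorem tree_weight_sum_bound {n t : ℕ} (hn : 0 < n) (ht : 0 < t)
    (C : ℝ) (hC : 0 < C)
    (s : Fin n → Fin n → ℝ) (hs : ∀ i j, 0 ≤ s i j)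
    (hsym : ∀ i j, s i j = s j i)
    (hB : ∀ i, (1 / (n : ℝ)) * ∑ j, s i j ≤ C ^ 2)
    (T : SimpleGraph (Fin t)) [DecidableRel T.Adj] (hT : T.IsTree) :
    ((n : ℝ) ^ t)⁻¹ * ∑ ι : Fin t → Fin n,
        ∏ e ∈ T.edgeFinset,
          Sym2.lift ⟨fun a b => s (ι a) (ι b), fun a b => hsym (ι a) (ι b)⟩ e
      ≤ C ^ (2 * (t - 1)) :=
  tree_weight_sum_bound_general hn C s hs hsym hB T hT
end

section
/- Let F_n and G be distribution functions on ℝ with G continuous. If the Stieltjes transforms S_n(z) = ∫ (x − z)^{-1} dF_n(x) converge to S(z) = ∫ (x − z)^{-1} dG(x) for every z in the upper half plane, then sup_x |F_n(x) − G(x)| → 0 as n → ∞. -/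
/-!
For `Im z ≠ 0` the function `x ↦ (x - z)⁻¹` extends continuously by `0` to the one-point
compactification `ℝ ∪ {∞}`. Together with the constants these functions span a subspace whose
closure is a star subalgebra: by the resolvent identity a product of two distinct resolvents is a
linear combination of them, and the square of a resolvent is a limit of such products. It separates
points, so by Stone–Weierstrass it is everything, and convergence of the Stieltjes transforms
becomes weak convergence of the push-forwards of `μ n` to `ℝ ∪ {∞}`. The limit gives no mass to
`∞`, so the portmanteau theorem yields `ν U ≤ liminf μ n U` for open `U ⊆ ℝ`, hence
`F n x → G x` wherever `ν {x} = 0`, i.e. everywhere. Pólya's argument upgrades this to uniform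
convergence: comparing `F n` and `G` at finitely many quantiles of `G` controls them everywhere.
-/

open MeasureTheory ProbabilityTheory Filter Set Topology ComplexConjugate OnePoint

noncomputable section

section CompactSpace

variable {X E ι : Type*} [TopologicalSpace X] [CompactSpace X] [MeasurableSpace X]
  [OpensMeasurableSpace X] [NormedAddCommGroup E]

lemma integrable_continuousMap (μ : Measure X) [IsFiniteMeasure μ] (f : C(X, E)) :
    Integrable f μ :=
  .of_bound f.continuous.aestronglyMeasurable_of_compactSpace ‖f‖ (.of_forall f.norm_coe_le_norm)

lemma lipschitzWith_one_integral [NormedSpace ℝ E] (μ : Measure X) [IsProbabilityMeasure μ] :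
    LipschitzWith 1 fun f : C(X, E) => ∫ x, f x ∂μ := by
  refine LipschitzWith.of_dist_le_mul fun f g => ?_
  rw [NNReal.coe_one, one_mul, dist_eq_norm, dist_eq_norm,
    ← integral_sub (integrable_continuousMap μ f) (integrable_continuousMap μ g)]
  simpa using norm_integral_le_of_norm_le_const (μ := μ) (.of_forall (f - g).norm_coe_le_norm)

lemma isClosed_setOf_tendsto_integral [NormedSpace ℝ E] (μs : ι → Measure X)
    [∀ i, IsProbabilityMeasure (μs i)] (μ : Measure X) [IsProbabilityMeasure μ] (l : Filter ι) :
    IsClosed {f : C(X, E) | Tendsto (fun i => ∫ x, f x ∂μs i) l (𝓝 (∫ x, f x ∂μ))} :=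
  (LipschitzWith.uniformEquicontinuous _ 1 fun i => lipschitzWith_one_integral (μs i))
    |>.equicontinuous.isClosed_setOfPred_tendsto (lipschitzWith_one_integral μ).continuous

end CompactSpace

namespace StieltjesTransform

lemma tendsto_inv_sub_cocompact (z : ℂ) :
    Tendsto (fun x : ℝ => ((x : ℂ) - z)⁻¹) (cocompact ℝ) (𝓝 0) := by
  rw [← Metric.cobounded_eq_cocompact]
  exact tendsto_inv₀_cobounded.comp
    ((tendsto_sub_const_cobounded z).comp (RCLike.tendsto_ofReal_cobounded_cobounded ℂ))

lemma sub_ne_zero_of_im_ne_zero {z : ℂ} (hz : z.im ≠ 0) (x : ℝ) : (x : ℂ) - z ≠ 0 := by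
  intro h
  exact hz (by simpa using (congrArg Complex.im h).symm)

/-- The function `x ↦ (x - z)⁻¹`, extended by `0` at `∞`; junk value `0` when `z` is real. -/
def resolventFun (z : ℂ) : C(OnePoint ℝ, ℂ) :=
  if hz : z.im = 0 then 0 else
    continuousMapMk ⟨fun x : ℝ => ((x : ℂ) - z)⁻¹,
      (Complex.continuous_ofReal.sub continuous_const).inv₀ (sub_ne_zero_of_im_ne_zero hz)⟩ 0
      (by rw [coclosedCompact_eq_cocompact]; exact tendsto_inv_sub_cocompact z)

variable {z w : ℂ}

@[simp]
lemma resolventFun_coe (hz : z.im ≠ 0) (x : ℝ) : resolventFun z x = ((x : ℂ) - z)⁻¹ := by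
  rw [resolventFun, dif_neg hz]
  rfl

@[simp]
lemma resolventFun_infty (z : ℂ) : resolventFun z ∞ = 0 := by
  unfold resolventFun
  split_ifs <;> rfl

lemma resolventFun_of_im_eq_zero (hz : z.im = 0) : resolventFun z = 0 := by
  rw [resolventFun, dif_pos hz]

lemma norm_resolventFun_le (z : ℂ) : ‖resolventFun z‖ ≤ |z.im|⁻¹ := by
  by_cases hz : z.im = 0
  · simp [resolventFun_of_im_eq_zero hz]
  refine (ContinuousMap.norm_le _ (by positivity)).2 fun p => ?_
  induction p using OnePoint.rec with
  | infty => simp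
  | coe x =>
    rw [resolventFun_coe hz, norm_inv]
    refine inv_anti₀ (abs_pos.2 hz) ?_
    simpa using Complex.abs_im_le_norm ((x : ℂ) - z)

lemma star_resolventFun (z : ℂ) : star (resolventFun z) = resolventFun (conj z) := by
  by_cases hz : z.im = 0
  · rw [resolventFun_of_im_eq_zero hz, resolventFun_of_im_eq_zero (by simpa using hz), star_zero]
  ext p
  induction p using OnePoint.rec with
  | infty => simp
  | coe x =>
    simp [resolventFun_coe hz, resolventFun_coe (show (conj z).im ≠ 0 by simpa using hz)]

lemma resolventFun_sub_resolventFun (hw : w.im ≠ 0) (hz : z.im ≠ 0) :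
    resolventFun w - resolventFun z = (w - z) • (resolventFun w * resolventFun z) := by
  ext p
  induction p using OnePoint.rec with
  | infty => simp
  | coe x =>
    have := sub_ne_zero_of_im_ne_zero hw x
    have := sub_ne_zero_of_im_ne_zero hz x
    simp only [ContinuousMap.sub_apply, ContinuousMap.smul_apply, ContinuousMap.mul_apply,
      resolventFun_coe hw, resolventFun_coe hz, smul_eq_mul]
    field_simp
    ring

lemma continuousOn_resolventFun : ContinuousOn resolventFun {z | z.im ≠ 0} := by
  intro z hz
  rw [ContinuousWithinAt, tendsto_iff_norm_sub_tendsto_zero]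
  have hbound : Tendsto (fun w : ℂ => ‖w - z‖ * (|w.im|⁻¹ * |z.im|⁻¹))
      (𝓝[{z | z.im ≠ 0}] z) (𝓝 0) := by
    have : ContinuousAt (fun w : ℂ => ‖w - z‖ * (|w.im|⁻¹ * |z.im|⁻¹)) z := by
      have : |z.im| ≠ 0 := abs_ne_zero.2 hz
      fun_prop (disch := assumption)
    simpa using this.tendsto.mono_left nhdsWithin_le_nhds
  refine squeeze_zero' (Eventually.of_forall fun _ => norm_nonneg _) ?_ hbound
  filter_upwards [self_mem_nhdsWithin] with w hw
  rw [resolventFun_sub_resolventFun hw hz, norm_smul]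
  gcongr
  exact (norm_mul_le _ _).trans
    (mul_le_mul (norm_resolventFun_le w) (norm_resolventFun_le z) (norm_nonneg _) (by positivity))

lemma injective_resolventFun (hz : z.im ≠ 0) : Function.Injective (resolventFun z) := by
  have hne (x : ℝ) : resolventFun z x ≠ 0 := by
    simpa [resolventFun_coe hz] using sub_ne_zero_of_im_ne_zero hz x
  intro p q hpq
  induction p using OnePoint.rec with
  | infty =>
    induction q using OnePoint.rec with
    | infty => rfl
    | coe y => exact absurd (by simpa using hpq.symm) (hne y)
  | coe x =>
    induction q using OnePoint.rec with
    | infty => exact absurd (by simpa using hpq) (hne x)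
    | coe y => simpa [resolventFun_coe hz] using hpq

def resolventSpan : Submodule ℂ C(OnePoint ℝ, ℂ) :=
  Submodule.span ℂ (insert 1 (resolventFun '' {z | z.im ≠ 0}))

lemma one_mem_resolventSpan : 1 ∈ resolventSpan :=
  Submodule.subset_span (mem_insert _ _)

lemma resolventFun_mem_resolventSpan (hz : z.im ≠ 0) : resolventFun z ∈ resolventSpan :=
  Submodule.subset_span (mem_insert_of_mem _ ⟨z, hz, rfl⟩)

lemma star_mem_resolventSpan {f : C(OnePoint ℝ, ℂ)} (hf : f ∈ resolventSpan) :
    star f ∈ resolventSpan := by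
  induction hf using Submodule.span_induction with
  | mem g hg =>
    rcases hg with rfl | ⟨z, hz, rfl⟩
    · simpa using one_mem_resolventSpan
    · rw [star_resolventFun]
      exact resolventFun_mem_resolventSpan (by simpa using hz)
  | zero => simp
  | add f g _ _ hf hg => simpa using add_mem hf hg
  | smul c f _ hf => simpa using Submodule.smul_mem _ (star c) hf

lemma resolventFun_mul_mem_resolventSpan (hz : z.im ≠ 0) (hw : w.im ≠ 0) (hzw : z ≠ w) :
    resolventFun z * resolventFun w ∈ resolventSpan := by
  rw [← inv_smul_smul₀ (sub_ne_zero.2 hzw) (resolventFun z * resolventFun w),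
    ← resolventFun_sub_resolventFun hz hw]
  exact Submodule.smul_mem _ _
    (sub_mem (resolventFun_mem_resolventSpan hz) (resolventFun_mem_resolventSpan hw))

/-- The square of a resolvent is a limit of products of two distinct resolvents. -/
lemma resolventFun_mul_self_mem_topologicalClosure (hz : z.im ≠ 0) :
    resolventFun z * resolventFun z ∈ resolventSpan.topologicalClosure := by
  set s := {w : ℂ | w.im ≠ 0} \ {z}
  have hs : s ∈ 𝓝[≠] z := sdiff_mem_nhdsWithin_compl
    ((isOpen_ne_fun Complex.continuous_im continuous_const).mem_nhds hz) _
  have : (𝓝[s] z).NeBot := NeBot.mono inferInstance (nhdsWithin_le_of_mem hs)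
  refine mem_closure_of_tendsto (tendsto_const_nhds.mul
    ((continuousOn_resolventFun z hz).mono_left (nhdsWithin_mono z (sdiff_subset : s ⊆ _)))) ?_
  filter_upwards [self_mem_nhdsWithin] with w ⟨hw, hwz⟩
  exact resolventFun_mul_mem_resolventSpan hz hw (Ne.symm hwz)

lemma resolventFun_mul_mem_topologicalClosure (hz : z.im ≠ 0) (hw : w.im ≠ 0) :
    resolventFun z * resolventFun w ∈ resolventSpan.topologicalClosure := by
  obtain rfl | hzw := eq_or_ne z w
  · exact resolventFun_mul_self_mem_topologicalClosure hz
  · exact Submodule.le_topologicalClosure _ (resolventFun_mul_mem_resolventSpan hz hw hzw)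

lemma mul_mem_topologicalClosure_resolventSpan {f g : C(OnePoint ℝ, ℂ)}
    (hf : f ∈ resolventSpan.topologicalClosure) (hg : g ∈ resolventSpan.topologicalClosure) :
    f * g ∈ resolventSpan.topologicalClosure := by
  have hspan : resolventSpan * resolventSpan ≤ resolventSpan.topologicalClosure := by
    refine (Submodule.span_mul_span ℂ _ _).trans_le (Submodule.span_le.2 ?_)
    rintro _ ⟨f, hf, g, hg, rfl⟩
    rcases hf with rfl | ⟨z, hz, rfl⟩
    · simp only [one_mul]
      exact Submodule.le_topologicalClosure _ (Submodule.subset_span hg)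
    rcases hg with rfl | ⟨w, hw, rfl⟩
    · simp only [mul_one]
      exact Submodule.le_topologicalClosure _ (resolventFun_mem_resolventSpan hz)
    exact resolventFun_mul_mem_topologicalClosure hz hw
  have := map_mem_closure₂ continuous_mul hf hg
    fun a ha b hb => Submodule.mul_le.1 hspan a ha b hb
  rwa [← Submodule.topologicalClosure_coe,
    resolventSpan.isClosed_topologicalClosure.submodule_topologicalClosure_eq] at this

def resolventAlgebra : StarSubalgebra ℂ C(OnePoint ℝ, ℂ) where
  toSubalgebra := resolventSpan.topologicalClosure.toSubalgebra
    (Submodule.le_topologicalClosure _ one_mem_resolventSpan)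
    fun _ _ => mul_mem_topologicalClosure_resolventSpan
  star_mem' {f} hf := by
    have := map_mem_closure continuous_star hf fun g hg => star_mem_resolventSpan hg
    rwa [← Submodule.topologicalClosure_coe] at this

lemma resolventAlgebra_separatesPoints : resolventAlgebra.SeparatesPoints := by
  intro p q hpq
  refine ⟨_, ⟨resolventFun Complex.I, ?_, rfl⟩, (injective_resolventFun (by simp)).ne hpq⟩
  exact subset_closure (resolventFun_mem_resolventSpan (by simp))

lemma dense_resolventSpan : Dense (resolventSpan : Set C(OnePoint ℝ, ℂ)) := by
  have h := ContinuousMap.starSubalgebra_topologicalClosure_eq_top_of_separatesPoints _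
    resolventAlgebra_separatesPoints
  have h' : closure (resolventAlgebra : Set C(OnePoint ℝ, ℂ)) = univ := by
    simpa using congrArg ((↑) : StarSubalgebra ℂ C(OnePoint ℝ, ℂ) → Set C(OnePoint ℝ, ℂ)) h
  rw [dense_iff_closure_eq, ← closure_closure]
  exact h'

def stieltjesTransform (μ : Measure ℝ) (z : ℂ) : ℂ :=
  ∫ x, ((x : ℂ) - z)⁻¹ ∂μ

lemma stieltjesTransform_conj (μ : Measure ℝ) (z : ℂ) :
    stieltjesTransform μ (conj z) = conj (stieltjesTransform μ z) := by
  simp [stieltjesTransform, ← integral_conj]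

instance : MeasurableSpace (OnePoint ℝ) := borel _

instance : BorelSpace (OnePoint ℝ) := ⟨rfl⟩

-- Gives `HasOuterApproxClosed (OnePoint ℝ)`, which the portmanteau theorem needs.
instance : TopologicalSpace.MetrizableSpace (OnePoint ℝ) :=
  (onePointEquivSphereOfFinrankEq (ι := Fin 2) (V := ℝ) (by simp)).isEmbedding.metrizableSpace

lemma integral_map_coe (μ : Measure ℝ) (f : C(OnePoint ℝ, ℂ)) :
    ∫ p, f p ∂μ.map ((↑) : ℝ → OnePoint ℝ) = ∫ x : ℝ, f x ∂μ :=
  integral_map continuous_coe.aemeasurable f.continuous.aestronglyMeasurable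

lemma integral_map_coe_resolventFun (μ : Measure ℝ) (hz : z.im ≠ 0) :
    ∫ p, resolventFun z p ∂μ.map ((↑) : ℝ → OnePoint ℝ) = stieltjesTransform μ z := by
  simp [integral_map_coe, resolventFun_coe hz, stieltjesTransform]

lemma tendsto_stieltjesTransform_of_im_ne_zero {ι : Type*} {l : Filter ι} {μs : ι → Measure ℝ}
    {ν : Measure ℝ}
    (hS : ∀ z : ℂ, 0 < z.im → Tendsto (fun i => stieltjesTransform (μs i) z) l
      (𝓝 (stieltjesTransform ν z)))
    (hz : z.im ≠ 0) :
    Tendsto (fun i => stieltjesTransform (μs i) z) l (𝓝 (stieltjesTransform ν z)) := by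
  rcases hz.lt_or_gt with hz | hz
  · have := (Complex.continuous_conj.tendsto _).comp (hS (conj z) (by simpa using hz))
    simpa [Function.comp_def, stieltjesTransform_conj] using this
  · exact hS z hz

section Convergence

variable {ι : Type*} {l : Filter ι} {μs : ι → Measure ℝ} [∀ i, IsProbabilityMeasure (μs i)]
  {ν : Measure ℝ} [IsProbabilityMeasure ν]

lemma tendsto_integral_of_tendsto_stieltjesTransform
    (hS : ∀ z : ℂ, 0 < z.im → Tendsto (fun i => stieltjesTransform (μs i) z) l
      (𝓝 (stieltjesTransform ν z)))
    (f : C(OnePoint ℝ, ℂ)) :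
    Tendsto (fun i => ∫ x : ℝ, f x ∂μs i) l (𝓝 (∫ x : ℝ, f x ∂ν)) := by
  have (μ : Measure ℝ) [IsProbabilityMeasure μ] :
      IsProbabilityMeasure (μ.map ((↑) : ℝ → OnePoint ℝ)) :=
    Measure.isProbabilityMeasure_map continuous_coe.aemeasurable
  have hclosed := isClosed_setOf_tendsto_integral (E := ℂ)
    (fun i => (μs i).map ((↑) : ℝ → OnePoint ℝ)) (ν.map (↑)) l
  have hspan : (resolventSpan : Set C(OnePoint ℝ, ℂ)) ⊆
      {f | Tendsto (fun i => ∫ p, f p ∂(μs i).map (↑)) l (𝓝 (∫ p, f p ∂ν.map (↑)))} := by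
    intro f hf
    induction hf using Submodule.span_induction with
    | mem g hg =>
      rcases hg with rfl | ⟨z, hz, rfl⟩
      · simpa [Set.mem_ofPred_eq] using tendsto_const_nhds
      · simpa only [Set.mem_ofPred_eq, integral_map_coe_resolventFun _ hz] using
          tendsto_stieltjesTransform_of_im_ne_zero hS hz
    | zero => simpa using tendsto_const_nhds
    | add f g _ _ hf hg =>
      simp only [Set.mem_ofPred_eq, ContinuousMap.add_apply,
        integral_add (integrable_continuousMap _ f) (integrable_continuousMap _ g)]
      exact hf.add hg
    | smul c f _ hf => simpa [integral_const_mul] using hf.const_smul c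
  have := (hclosed.closure_subset_iff.2 hspan) (dense_resolventSpan.closure_eq ▸ mem_univ f)
  simpa only [Set.mem_ofPred_eq, integral_map_coe] using this

lemma le_liminf_measure_of_tendsto_stieltjesTransform
    (hS : ∀ z : ℂ, 0 < z.im → Tendsto (fun i => stieltjesTransform (μs i) z) l
      (𝓝 (stieltjesTransform ν z)))
    {U : Set ℝ} (hU : IsOpen U) :
    ν U ≤ liminf (fun i => μs i U) l := by
  let P (μ : Measure ℝ) [IsProbabilityMeasure μ] : ProbabilityMeasure (OnePoint ℝ) :=
    ProbabilityMeasure.map ⟨μ, inferInstance⟩ continuous_coe.aemeasurable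
  have hP (μ : Measure ℝ) [IsProbabilityMeasure μ] : (P μ : Measure (OnePoint ℝ)) = μ.map (↑) :=
    rfl
  have hweak : Tendsto (fun i => P (μs i)) l (𝓝 (P ν)) := by
    rw [ProbabilityMeasure.tendsto_iff_forall_integral_rclike_tendsto ℂ]
    intro g
    have h := tendsto_integral_of_tendsto_stieltjesTransform hS g.toContinuousMap
    simp only [← integral_map_coe] at h
    simpa [hP] using h
  have hU' : IsOpen (((↑) : ℝ → OnePoint ℝ) '' U) := isOpenMap_coe U hU
  have := ProbabilityMeasure.le_liminf_measure_open_of_tendsto hweak hU'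
  simpa [hP, Measure.map_apply continuous_coe.measurable hU'.measurableSet,
    preimage_image_eq _ coe_injective] using this

lemma tendsto_measure_Iic_of_tendsto_stieltjesTransform
    (hS : ∀ z : ℂ, 0 < z.im → Tendsto (fun i => stieltjesTransform (μs i) z) l
      (𝓝 (stieltjesTransform ν z)))
    {x : ℝ} (hx : ν {x} = 0) :
    Tendsto (fun i => μs i (Iic x)) l (𝓝 (ν (Iic x))) :=
  tendsto_measure_of_null_frontier
    (fun _ hU => le_liminf_measure_of_tendsto_stieltjesTransform hS hU) (by rwa [frontier_Iic])

end Convergence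

end StieltjesTransform

lemma measure_singleton_eq_zero_of_continuous_cdf {ν : Measure ℝ} [IsProbabilityMeasure ν]
    (h : Continuous (cdf ν)) (x : ℝ) : ν {x} = 0 := by
  rw [← measure_cdf ν, StieltjesFunction.measure_singleton,
    (monotone_cdf ν).continuousWithinAt_Iio_iff_leftLim_eq.1
      h.continuousAt.continuousWithinAt, sub_self, ENNReal.ofReal_zero]

lemma abs_sub_le_of_abs_sub_le_at_quantiles {f g : ℝ → ℝ} {t : ℕ → ℝ} {ε : ℝ}
    (hf : Monotone f) (hf0 : ∀ x, 0 ≤ f x) (hf1 : ∀ x, f x ≤ 1)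
    (hg : Monotone g) (hg0 : ∀ x, 0 ≤ g x) (hg1 : ∀ x, g x ≤ 1) (hε : 0 < ε)
    (ht : ∀ k : ℕ, 0 < k → k * ε < 1 → g (t k) = k * ε)
    (hclose : ∀ k : ℕ, 0 < k → k * ε < 1 → |f (t k) - g (t k)| ≤ ε) (x : ℝ) :
    |f x - g x| ≤ 3 * ε := by
  -- `x` lies between the quantiles of levels `(k - 1) ε` and `(k + 1) ε` (when they exist).
  set k := ⌊g x / ε⌋₊
  have hk : k * ε ≤ g x := (le_div_iff₀ hε).1 (Nat.floor_le (div_nonneg (hg0 x) hε.le))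
  have hk' : g x < (k + 1) * ε := (div_lt_iff₀ hε).1 (Nat.lt_floor_add_one _)
  rw [abs_le]
  constructor
  · obtain hk2 | hk2 := lt_or_ge k 2
    · have : (k : ℝ) + 1 ≤ 2 := by exact_mod_cast hk2
      nlinarith [hf0 x]
    · have hlevel : ((k - 1 : ℕ) : ℝ) = k - 1 := by
        rw [Nat.cast_sub (by omega), Nat.cast_one]
      have hlt : ((k - 1 : ℕ) : ℝ) * ε < 1 := by rw [hlevel]; linarith [hg1 x]
      have htk := ht (k - 1) (by omega) hlt
      have hc := (abs_le.1 (hclose (k - 1) (by omega) hlt)).1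
      have hfx := hf (hg.reflect_lt (show g (t (k - 1)) < g x by rw [htk, hlevel]; linarith)).le
      rw [htk, hlevel] at hc
      linarith
  · obtain hk1 | hk1 := lt_or_ge (((k + 1 : ℕ) : ℝ) * ε) 1
    · have htk := ht (k + 1) (by omega) hk1
      have hc := (abs_le.1 (hclose (k + 1) (by omega) hk1)).2
      push_cast at htk
      have hfx := hf (hg.reflect_lt (show g x < g (t (k + 1)) by rw [htk]; exact hk')).le
      rw [htk] at hc
      linarith
    · push_cast at hk1
      linarith [hf1 x]

/-- **Pólya's theorem**. -/
theorem tendstoUniformly_cdf_of_tendsto {ι : Type*} {l : Filter ι} {μs : ι → Measure ℝ}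
    [∀ i, IsProbabilityMeasure (μs i)] {ν : Measure ℝ} [IsProbabilityMeasure ν]
    (hν : Continuous (cdf ν)) (h : ∀ x, Tendsto (fun i => cdf (μs i) x) l (𝓝 (cdf ν x))) :
    TendstoUniformly (fun i => cdf (μs i)) (cdf ν) l := by
  rw [Metric.tendstoUniformly_iff]
  intro ε hε
  have hquantile (k : ℕ) : ∃ t, 0 < k → k * (ε / 4) < 1 → cdf ν t = k * (ε / 4) := by
    by_cases hk : 0 < k ∧ k * (ε / 4) < 1
    · have h0 : 0 < k * (ε / 4) := by have := hk.1; positivity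
      obtain ⟨t, ht⟩ := mem_range_of_exists_le_of_exists_ge hν
        ((tendsto_cdf_atBot ν).eventually (eventually_le_nhds h0)).exists
        ((tendsto_cdf_atTop ν).eventually (eventually_ge_nhds hk.2)).exists
      exact ⟨t, fun _ _ => ht⟩
    · exact ⟨0, fun h0 h1 => absurd ⟨h0, h1⟩ hk⟩
  choose t ht using hquantile
  have hfin : {k : ℕ | 0 < k ∧ k * (ε / 4) < 1}.Finite := by
    refine (Set.finite_Iio ⌈4 / ε⌉₊).subset fun k hk => ?_
    have : (k : ℝ) < 4 / ε := by rw [lt_div_iff₀ hε]; linarith [hk.2]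
    exact Nat.cast_lt.1 (this.trans_le (Nat.le_ceil _))
  have hev : ∀ᶠ i in l, ∀ k ∈ {k : ℕ | 0 < k ∧ k * (ε / 4) < 1},
      |cdf (μs i) (t k) - cdf ν (t k)| ≤ ε / 4 := by
    refine hfin.eventually_all.2 fun k _ => ?_
    filter_upwards [(h (t k)).eventually
      (Metric.closedBall_mem_nhds (cdf ν (t k)) (by positivity : 0 < ε / 4))] with i hi
    rwa [Real.dist_eq] at hi
  filter_upwards [hev] with i hi x
  rw [dist_comm, Real.dist_eq]
  calc |cdf (μs i) x - cdf ν x| ≤ 3 * (ε / 4) :=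
        abs_sub_le_of_abs_sub_le_at_quantiles (monotone_cdf _) (cdf_nonneg _) (cdf_le_one _)
          (monotone_cdf _) (cdf_nonneg _) (cdf_le_one _) (by positivity) ht
          (fun k hk hk' => hi k ⟨hk, hk'⟩) x
    _ < ε := by linarith

lemma TendstoUniformly.tendsto_iSup_abs_sub {α ι : Type*} {l : Filter ι} {F : ι → α → ℝ}
    {G : α → ℝ} (h : TendstoUniformly F G l) :
    Tendsto (fun i => ⨆ x, |F i x - G x|) l (𝓝 0) := by
  rw [Metric.tendsto_nhds]
  intro ε hε
  filter_upwards [Metric.tendstoUniformly_iff.1 h (ε / 2) (half_pos hε)] with i hi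
  have h0 : 0 ≤ ⨆ x, |F i x - G x| := Real.iSup_nonneg fun x => abs_nonneg _
  have h1 : ⨆ x, |F i x - G x| ≤ ε / 2 :=
    Real.iSup_le (fun x => by rw [← Real.dist_eq, dist_comm]; exact (hi x).le) (by positivity)
  rw [Real.dist_eq, sub_zero, abs_of_nonneg h0]
  linarith

end

open StieltjesTransform in
theorem stieltjes_transform_convergence_implies_uniform_cdf_convergence
    (μ : ℕ → Measure ℝ) [∀ n, IsProbabilityMeasure (μ n)]
    (ν : Measure ℝ) [IsProbabilityMeasure ν]
    (hGcont : Continuous fun x : ℝ => (ν (Set.Iic x)).toReal)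
    (hS : ∀ z : ℂ, 0 < z.im →
      Tendsto (fun n => ∫ x : ℝ, ((x : ℂ) - z)⁻¹ ∂(μ n)) atTop
        (nhds (∫ x : ℝ, ((x : ℂ) - z)⁻¹ ∂ν))) :
    Tendsto (fun n => ⨆ x : ℝ,
        |(μ n (Set.Iic x)).toReal - (ν (Set.Iic x)).toReal|) atTop (nhds 0) := by
  have hcdf (ρ : Measure ℝ) [IsProbabilityMeasure ρ] :
      cdf ρ = fun x => (ρ (Iic x)).toReal :=
    funext fun x => cdf_eq_real ρ x
  have hνcont : Continuous (cdf ν) := hcdf ν ▸ hGcont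
  have hpointwise (x : ℝ) : Tendsto (fun n => cdf (μ n) x) atTop (𝓝 (cdf ν x)) := by
    simp only [hcdf]
    exact (ENNReal.tendsto_toReal (measure_ne_top ν _)).comp
      (tendsto_measure_Iic_of_tendsto_stieltjesTransform hS
        (measure_singleton_eq_zero_of_continuous_cdf hνcont x))
  simpa only [hcdf] using (tendstoUniformly_cdf_of_tendsto hνcont hpointwise).tendsto_iSup_abs_sub
end
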